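/- arXiv:2605.24640 — 4 statements merged into one kernel-verified Lean document; each statement's English description precedes it below -/
import Mathlib

section
/- Let R = R_1 × ⋯ × R_n be a product of finite commutative local rings, F the set of indices k with R_k a field, and for k ∈ F let V_k be the set of nonzero zero-divisors x with x_k = 0 and x_i a unit for all i ≠ k. Then for each k ∈ F, V_k is an independent set in the weakly zero-divisor graph WΓ(R): no two distinct elements of V_k are adjacent. -/
attribute [local instance] Classical.propDecidable

/-- The weakly zero-divisor graph of a commutative ring `R`: vertices are the
nonzero zero-divisors, with distinct `x, y` adjacent iff there exist nonzero
`r ∈ Ann(x)` and `s ∈ Ann(y)` with `r * s = 0`. -/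
def wGamma (R : Type*) [CommRing R] :
    SimpleGraph {x : R // x ≠ 0 ∧ ∃ y : R, y ≠ 0 ∧ x * y = 0} where
  Adj a b := a ≠ b ∧
    ∃ r s : R, r ≠ 0 ∧ s ≠ 0 ∧ r * (a : R) = 0 ∧ s * (b : R) = 0 ∧ r * s = 0
  symm := by
    constructor
    rintro a b ⟨hab, r, s, hr, hs, hra, hsb, hrs⟩
    exact ⟨hab.symm, s, r, hs, hr, hsb, hra, by rwa [mul_comm]⟩
  loopless := by constructor; rintro a ⟨hab, -⟩; exact hab rfl

/-- In a product of finite commutative local rings, for each index `k` whose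
factor is a field, the set `V_k` (vertices vanishing at `k` and unit elsewhere)
is an independent set in the weakly zero-divisor graph. -/
theorem stmt_5 (n : ℕ) (R : Fin n → Type*) [∀ i, CommRing (R i)]
    [∀ i, Finite (R i)] [∀ i, IsLocalRing (R i)]
    (k : Fin n) (hk : IsField (R k))
    (x y : {x : ∀ i, R i // x ≠ 0 ∧ ∃ y : ∀ i, R i, y ≠ 0 ∧ x * y = 0})
    (hx : (x : ∀ i, R i) k = 0 ∧ ∀ i ≠ k, IsUnit ((x : ∀ i, R i) i))
    (hy : (y : ∀ i, R i) k = 0 ∧ ∀ i ≠ k, IsUnit ((y : ∀ i, R i) i))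
    (hxy : x ≠ y) :
    ¬ (wGamma (∀ i, R i)).Adj x y := by
  rintro ⟨-, r, s, hr, hs, hra, hsb, hrs⟩
  -- r vanishes off k
  have hrk : ∀ i ≠ k, r i = 0 := by
    intro i hi
    have := congrFun hra i
    simpa using (hx.2 i hi).mul_left_eq_zero.mp (by simpa [mul_comm] using this)
  have hsk : ∀ i ≠ k, s i = 0 := by
    intro i hi
    have := congrFun hsb i
    simpa using (hy.2 i hi).mul_left_eq_zero.mp (by simpa [mul_comm] using this)
  have hrk0 : r k ≠ 0 := by
    intro h
    apply hr
    funext i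
    by_cases hik : i = k
    · subst hik; exact h
    · exact hrk i hik
  have hsk0 : s k ≠ 0 := by
    intro h
    apply hs
    funext i
    by_cases hik : i = k
    · subst hik; exact h
    · exact hsk i hik
  have hprod : r k * s k = 0 := congrFun hrs k
  letI := hk.toField
  rcases mul_eq_zero.mp hprod with h | h
  · exact hrk0 h
  · exact hsk0 h
end

section
/- With the notation above, for each k ∈ F, every vertex of V_k is adjacent in WΓ(R) to every vertex of Z(R)* \ V_k. Consequently WΓ(R) is the complete multipartite graph whose parts are the sets V_k (k ∈ F) together with each vertex of V_0 as a singleton part. -/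
attribute [local instance] Classical.propDecidable

/-- In a finite commutative ring, every nonunit has a nonzero annihilator. -/
lemma exists_ann {S : Type*} [CommRing S] [Finite S] {a : S} (ha : ¬ IsUnit a) :
    ∃ t : S, t ≠ 0 ∧ t * a = 0 := by
  have h : ¬ Function.Injective (fun t : S => t * a) := by
    intro h
    obtain ⟨t, ht⟩ := Finite.injective_iff_surjective.mp h 1
    exact ha (IsUnit.of_mul_eq_one (a := a) t (by rw [mul_comm]; exact ht))
  rw [Function.not_injective_iff] at h
  obtain ⟨t₁, t₂, he, hne⟩ := h
  refine ⟨t₁ - t₂, sub_ne_zero.mpr hne, by rw [sub_mul, he, sub_self]⟩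

/-- In a finite local commutative ring that is not a field, there is a nonzero
element annihilating every nonunit (a nonzero socle element). -/
lemma exists_socle {S : Type*} [CommRing S] [Finite S] [IsLocalRing S]
    (hS : ¬ IsField S) :
    ∃ w : S, w ≠ 0 ∧ ¬ IsUnit w ∧ ∀ a : S, ¬ IsUnit a → w * a = 0 := by
  have hm : IsNilpotent (IsLocalRing.maximalIdeal S) := by
    have := IsArtinianRing.isNilpotent_jacobson_bot (R := S)
    rwa [IsLocalRing.jacobson_eq_maximalIdeal ⊥ bot_ne_top] at this
  obtain ⟨e, he⟩ := hm
  have hP : ∃ e, (IsLocalRing.maximalIdeal S) ^ e = 0 := ⟨e, he⟩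
  classical
  set d := Nat.find hP with hd
  have hde : (IsLocalRing.maximalIdeal S) ^ d = 0 := Nat.find_spec hP
  have hmne : IsLocalRing.maximalIdeal S ≠ ⊥ :=
    fun h => hS (IsLocalRing.isField_iff_maximalIdeal_eq.mpr h)
  have hd1 : 1 ≤ d - 1 := by
    rcases Nat.lt_or_ge d 2 with h | h
    · interval_cases d
      · rw [pow_zero, Ideal.one_eq_top] at hde
        exact absurd ((Submodule.eq_bot_iff _).mp hde 1 trivial) one_ne_zero
      · rw [pow_one] at hde
        exact absurd hde hmne
    · omega
  have hlt : d - 1 < d := by omega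
  have hne : (IsLocalRing.maximalIdeal S) ^ (d - 1) ≠ 0 := Nat.find_min hP hlt
  obtain ⟨w, hwmem, hw0⟩ := Submodule.exists_mem_ne_zero_of_ne_bot (by simpa using hne)
  have hwm : w ∈ IsLocalRing.maximalIdeal S :=
    Ideal.pow_le_self (by omega) hwmem
  refine ⟨w, hw0, fun hu => hwm hu, fun a ha => ?_⟩
  have hmem : w * a ∈ (IsLocalRing.maximalIdeal S) ^ d := by
    have hpow : (IsLocalRing.maximalIdeal S) ^ d
        = (IsLocalRing.maximalIdeal S) ^ (d - 1) * IsLocalRing.maximalIdeal S := by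
      rw [← pow_succ]; congr 1; omega
    rw [hpow]
    exact Ideal.mul_mem_mul hwmem ha
  rw [hde] at hmem
  simpa using hmem

lemma single_mul_pi {n : ℕ} {R : Fin n → Type*} [∀ i, CommRing (R i)]
    (i : Fin n) (t : R i) (x : ∀ j, R j) :
    Pi.single i t * x = Pi.single i (t * x i) := by
  classical
  funext j
  rcases eq_or_ne j i with rfl | h
  · simp
  · simp [Pi.single_eq_of_ne h]

lemma single_ne_zero_pi {n : ℕ} {R : Fin n → Type*} [∀ i, CommRing (R i)]
    {i : Fin n} {t : R i} (ht : t ≠ 0) :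
    (Pi.single i t : ∀ j, R j) ≠ 0 := by
  classical
  intro h
  apply ht
  have := congrFun h i
  simpa using this

lemma single_mul_single_ne {n : ℕ} {R : Fin n → Type*} [∀ i, CommRing (R i)]
    {i j : Fin n} (h : i ≠ j) (t : R i) (u : R j) :
    (Pi.single i t : ∀ l, R l) * Pi.single j u = 0 := by
  classical
  funext l
  rcases eq_or_ne l i with rfl | hl
  · have : (Pi.single j u : ∀ l, R l) l = 0 := Pi.single_eq_of_ne h u
    simp [this]
  · have : (Pi.single i t : ∀ l, R l) l = 0 := Pi.single_eq_of_ne hl t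
    simp [this]

/-- A vertex of the weakly zero-divisor graph of a product has some nonunit
component. -/
lemma vertex_nonunit {n : ℕ} {R : Fin n → Type*} [∀ i, CommRing (R i)]
    (v : ∀ i, R i) (hv : ∃ z : ∀ i, R i, z ≠ 0 ∧ v * z = 0) :
    ∃ i, ¬ IsUnit (v i) := by
  obtain ⟨z, hz, hvz⟩ := hv
  by_contra hc
  push_neg at hc
  have hu : IsUnit v :=
    IsUnit.of_mul_eq_one (a := v) (fun i => ((hc i).unit⁻¹ : (R i)ˣ))
      (funext fun i => (hc i).mul_val_inv)
  exact hz (by rwa [hu.mul_right_eq_zero] at hvz)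

/-- For each field index `k`, every vertex of `V_k` is adjacent to every vertex
outside `V_k`; consequently the weakly zero-divisor graph is the complete
multipartite graph with parts the `V_k` (`k ∈ F`) together with the vertices of
`V_0` as singleton parts: two distinct vertices are adjacent iff they do not lie
in a common part `V_k`. -/
theorem stmt_7 (n : ℕ) (R : Fin n → Type*) [∀ i, CommRing (R i)]
    [∀ i, Finite (R i)] [∀ i, IsLocalRing (R i)] :
    (∀ (k : Fin n), IsField (R k) →
      ∀ x y : {x : ∀ i, R i // x ≠ 0 ∧ ∃ y : ∀ i, R i, y ≠ 0 ∧ x * y = 0},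
        ((x : ∀ i, R i) k = 0 ∧ ∀ i ≠ k, IsUnit ((x : ∀ i, R i) i)) →
        ¬ ((y : ∀ i, R i) k = 0 ∧ ∀ i ≠ k, IsUnit ((y : ∀ i, R i) i)) →
        (wGamma (∀ i, R i)).Adj x y) ∧
    (∀ x y : {x : ∀ i, R i // x ≠ 0 ∧ ∃ y : ∀ i, R i, y ≠ 0 ∧ x * y = 0},
      x ≠ y →
      ((wGamma (∀ i, R i)).Adj x y ↔
        ¬ ∃ k, IsField (R k) ∧
          ((x : ∀ i, R i) k = 0 ∧ ∀ i ≠ k, IsUnit ((x : ∀ i, R i) i)) ∧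
          ((y : ∀ i, R i) k = 0 ∧ ∀ i ≠ k, IsUnit ((y : ∀ i, R i) i)))) := by
  classical
  -- a nonzero element of a field is a unit
  have fieldUnit : ∀ (k : Fin n), IsField (R k) → ∀ a : R k, a ≠ 0 → IsUnit a := by
    intro k hk a ha
    obtain ⟨b, hb⟩ := hk.mul_inv_cancel ha
    exact IsUnit.of_mul_eq_one (a := a) b hb
  constructor
  · intro k hk x y hx hy
    have hxy : x ≠ y := by
      intro h; subst h; exact hy hx
    have h10 : (1 : R k) ≠ 0 := by
      obtain ⟨a, b, hab⟩ := hk.exists_pair_ne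
      intro h
      apply hab
      calc a = a * 1 := by ring
        _ = a * 0 := by rw [h]
        _ = b * 0 := by ring_nf
        _ = b * 1 := by rw [h]
        _ = b := by ring
    by_cases hyi : ∃ i, i ≠ k ∧ ¬ IsUnit ((y : ∀ i, R i) i)
    · obtain ⟨i, hik, hiu⟩ := hyi
      obtain ⟨t, ht0, hta⟩ := exists_ann hiu
      refine ⟨hxy, Pi.single k 1, Pi.single i t, single_ne_zero_pi h10,
        single_ne_zero_pi ht0, ?_, ?_, ?_⟩
      · rw [single_mul_pi, hx.1, mul_zero, Pi.single_zero]
      · rw [single_mul_pi, hta, Pi.single_zero]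
      · exact single_mul_single_ne (Ne.symm hik) 1 t
    · -- then y would not be a zero divisor: contradiction
      exfalso
      push_neg at hyi
      have hyk : (y : ∀ i, R i) k ≠ 0 := by
        intro h0
        exact hy ⟨h0, hyi⟩
      obtain ⟨z, hz0, hyz⟩ := y.2.2
      have hzi : ∀ i, i ≠ k → z i = 0 := by
        intro i hik
        have := congrFun hyz i
        simp only [Pi.mul_apply, Pi.zero_apply] at this
        exact ((hyi i hik).mul_right_eq_zero).mp this
      have hzk : z k ≠ 0 := by
        intro h0
        apply hz0
        funext i
        rcases eq_or_ne i k with rfl | h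
        · exact h0
        · exact hzi i h
      have := congrFun hyz k
      simp only [Pi.mul_apply, Pi.zero_apply] at this
      have hyu : IsUnit ((y : ∀ i, R i) k) := fieldUnit k hk _ hyk
      exact hzk (hyu.mul_right_eq_zero.mp this)
  · intro x y hxy
    constructor
    · rintro ⟨-, r, s, hr, hs, hrx, hsy, hrs⟩ ⟨k, hk, hxk, hyk⟩
      have hrk : ∀ i, i ≠ k → r i = 0 := by
        intro i hik
        have := congrFun hrx i
        simp only [Pi.mul_apply, Pi.zero_apply] at this
        exact ((hxk.2 i hik).mul_left_eq_zero).mp this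
      have hrk0 : r k ≠ 0 := by
        intro h0
        apply hr
        funext i
        rcases eq_or_ne i k with rfl | h
        · exact h0
        · exact hrk i h
      have hsk : ∀ i, i ≠ k → s i = 0 := by
        intro i hik
        have := congrFun hsy i
        simp only [Pi.mul_apply, Pi.zero_apply] at this
        exact ((hyk.2 i hik).mul_left_eq_zero).mp this
      have hsk0 : s k ≠ 0 := by
        intro h0
        apply hs
        funext i
        rcases eq_or_ne i k with rfl | h
        · exact h0
        · exact hsk i h
      have hrsk : r k * s k = 0 := by
        have := congrFun hrs k
        simpa using this
      have hru : IsUnit (r k) := fieldUnit k hk _ hrk0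
      exact hsk0 (hru.mul_right_eq_zero.mp hrsk)
    · intro h
      obtain ⟨i, hi⟩ := vertex_nonunit (x : ∀ i, R i) x.2.2
      obtain ⟨j, hj⟩ := vertex_nonunit (y : ∀ i, R i) y.2.2
      by_cases hsep : ∃ i' j', ¬ IsUnit ((x : ∀ i, R i) i') ∧
          ¬ IsUnit ((y : ∀ i, R i) j') ∧ i' ≠ j'
      · obtain ⟨i', j', hxi, hyj, hij⟩ := hsep
        obtain ⟨t, ht0, hta⟩ := exists_ann hxi
        obtain ⟨u, hu0, hua⟩ := exists_ann hyj
        exact ⟨hxy, Pi.single i' t, Pi.single j' u, single_ne_zero_pi ht0,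
          single_ne_zero_pi hu0,
          by rw [single_mul_pi, hta, Pi.single_zero],
          by rw [single_mul_pi, hua, Pi.single_zero],
          single_mul_single_ne hij t u⟩
      · push_neg at hsep
        have hik : i = j := hsep i j hi hj
        subst hik
        -- all nonunit components of x and of y sit at index i
        have hxu : ∀ i', i' ≠ i → IsUnit ((x : ∀ l, R l) i') := by
          intro i' hne
          by_contra hc
          exact hne (hsep i' i hc hj)
        have hyu : ∀ i', i' ≠ i → IsUnit ((y : ∀ l, R l) i') := by
          intro i' hne
          by_contra hc
          exact hne ((hsep i i' hi hc).symm)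
        have hnf : ¬ IsField (R i) := by
          intro hf
          apply h
          refine ⟨i, hf, ⟨?_, hxu⟩, ⟨?_, hyu⟩⟩
          · by_contra h0
            exact hi (fieldUnit i hf _ h0)
          · by_contra h0
            exact hj (fieldUnit i hf _ h0)
        obtain ⟨w, hw0, hwu, hann⟩ := exists_socle hnf
        refine ⟨hxy, Pi.single i w, Pi.single i w, single_ne_zero_pi hw0,
          single_ne_zero_pi hw0, ?_, ?_, ?_⟩
        · rw [single_mul_pi, hann _ hi, Pi.single_zero]
        · rw [single_mul_pi, hann _ hj, Pi.single_zero]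
        · rw [single_mul_pi, Pi.single_eq_same, hann _ hwu, Pi.single_zero]
end

section
/- For distinct primes p and q, the weakly zero-divisor graph WΓ(Z_{pq}) is isomorphic to the complete bipartite graph K_{p−1, q−1}, with parts {x : p ∣ x, q ∤ x} ∩ Z(Z_{pq})* and {x : q ∣ x, p ∤ x} ∩ Z(Z_{pq})*. -/
attribute [local instance] Classical.propDecidable

/-- For distinct primes `p, q`, the weakly zero-divisor graph `WΓ(ℤ_{pq})` is the
complete bipartite graph `K_{p-1, q-1}` with parts the multiples of `p` and the
multiples of `q` among the nonzero zero-divisors: every vertex lies in exactly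
one of the two parts, adjacency holds exactly between the parts, and the graph
is isomorphic to `K_{p-1, q-1}`. -/
theorem stmt_15 (p q : ℕ) (hp : p.Prime) (hq : q.Prime) (hpq : p ≠ q) :
    (∀ v : {x : ZMod (p * q) // x ≠ 0 ∧ ∃ y : ZMod (p * q), y ≠ 0 ∧ x * y = 0},
      (p ∣ (v : ZMod (p * q)).val ∧ ¬ q ∣ (v : ZMod (p * q)).val) ∨
      (q ∣ (v : ZMod (p * q)).val ∧ ¬ p ∣ (v : ZMod (p * q)).val)) ∧
    (∀ v w : {x : ZMod (p * q) // x ≠ 0 ∧ ∃ y : ZMod (p * q), y ≠ 0 ∧ x * y = 0},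
      (wGamma (ZMod (p * q))).Adj v w ↔
        ((p ∣ (v : ZMod (p * q)).val ∧ q ∣ (w : ZMod (p * q)).val) ∨
         (q ∣ (v : ZMod (p * q)).val ∧ p ∣ (w : ZMod (p * q)).val))) ∧
    Nonempty ((wGamma (ZMod (p * q))) ≃g
      completeBipartiteGraph (Fin (p - 1)) (Fin (q - 1))) := by
  have hp1 := hp.one_lt
  have hq1 := hq.one_lt
  have hp0 := hp.pos
  have hq0 := hq.pos
  have hn0 : 0 < p * q := Nat.mul_pos hp0 hq0
  haveI : NeZero (p * q) := ⟨hn0.ne'⟩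
  have hcop : Nat.Coprime p q := (Nat.coprime_primes hp hq).mpr hpq
  -- basic translation lemmas
  have hval : ∀ x : ZMod (p * q), x.val < p * q := fun x => ZMod.val_lt x
  have hzero : ∀ x : ZMod (p * q), x = 0 ↔ x.val = 0 :=
    fun x => (ZMod.val_eq_zero x).symm
  have hmul0 : ∀ x y : ZMod (p * q), x * y = 0 ↔ p * q ∣ x.val * y.val := by
    intro x y
    rw [hzero, ZMod.val_mul]
    exact Iff.symm Nat.dvd_iff_mod_eq_zero
  -- Part 1
  have part1 : ∀ v : {x : ZMod (p * q) // x ≠ 0 ∧ ∃ y : ZMod (p * q), y ≠ 0 ∧ x * y = 0},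
      (p ∣ (v : ZMod (p * q)).val ∧ ¬ q ∣ (v : ZMod (p * q)).val) ∨
      (q ∣ (v : ZMod (p * q)).val ∧ ¬ p ∣ (v : ZMod (p * q)).val) := by
    rintro ⟨x, hx0, y, hy0, hxy⟩
    simp only []
    have hxv0 : x.val ≠ 0 := fun h => hx0 ((hzero x).mpr h)
    have hdvd : p * q ∣ x.val * y.val := (hmul0 x y).mp hxy
    have hnotboth : ¬ (p ∣ x.val ∧ q ∣ x.val) := by
      rintro ⟨h1, h2⟩
      exact hxv0 (Nat.eq_zero_of_dvd_of_lt (hcop.mul_dvd_of_dvd_of_dvd h1 h2) (hval x))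
    by_cases h1 : p ∣ x.val
    · exact Or.inl ⟨h1, fun h2 => hnotboth ⟨h1, h2⟩⟩
    · refine Or.inr ⟨?_, h1⟩
      by_contra h2
      have hpy : p ∣ y.val :=
        (hp.dvd_mul.mp (dvd_trans (Dvd.intro q rfl) hdvd)).resolve_left h1
      have hqy : q ∣ y.val :=
        (hq.dvd_mul.mp (dvd_trans (Dvd.intro_left p rfl) hdvd)).resolve_left h2
      have : y.val = 0 :=
        Nat.eq_zero_of_dvd_of_lt (hcop.mul_dvd_of_dvd_of_dvd hpy hqy) (hval y)
      exact hy0 ((hzero y).mpr this)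
  -- Part 2
  have hq_ne : (q : ZMod (p * q)) ≠ 0 := by
    intro h
    rw [ZMod.natCast_eq_zero_iff] at h
    exact absurd (Nat.le_of_dvd hq0 h) (by nlinarith)
  have hp_ne : (p : ZMod (p * q)) ≠ 0 := by
    intro h
    rw [ZMod.natCast_eq_zero_iff] at h
    exact absurd (Nat.le_of_dvd hp0 h) (by nlinarith)
  have hqval : ((q : ZMod (p * q))).val = q := ZMod.val_cast_of_lt (by nlinarith)
  have hpval : ((p : ZMod (p * q))).val = p := ZMod.val_cast_of_lt (by nlinarith)
  have part2 : ∀ v w : {x : ZMod (p * q) // x ≠ 0 ∧ ∃ y : ZMod (p * q), y ≠ 0 ∧ x * y = 0},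
      (wGamma (ZMod (p * q))).Adj v w ↔
        ((p ∣ (v : ZMod (p * q)).val ∧ q ∣ (w : ZMod (p * q)).val) ∨
         (q ∣ (v : ZMod (p * q)).val ∧ p ∣ (w : ZMod (p * q)).val)) := by
    intro v w
    constructor
    · rintro ⟨hvw, r, s, hr, hs, hrv, hsw, hrs⟩
      have hrv' : p * q ∣ r.val * (v : ZMod (p * q)).val := (hmul0 _ _).mp hrv
      have hsw' : p * q ∣ s.val * (w : ZMod (p * q)).val := (hmul0 _ _).mp hsw
      have hrs' : p * q ∣ r.val * s.val := (hmul0 _ _).mp hrs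
      -- in the "same part" case we get a contradiction
      have key : ∀ a b : ℕ, (a.Prime) → (b.Prime) → a ≠ b → p * q = a * b →
          ¬ b ∣ (v : ZMod (p * q)).val → ¬ b ∣ (w : ZMod (p * q)).val → False := by
        intro a b ha hb hab hn hbv hbw
        have hcab : Nat.Coprime a b := (Nat.coprime_primes ha hb).mpr hab
        have hbr : b ∣ r.val := by
          have : b ∣ r.val * (v : ZMod (p * q)).val := dvd_trans (Dvd.intro_left a rfl) ((dvd_of_eq hn.symm).trans hrv')
          exact (hb.dvd_mul.mp this).resolve_right hbv
        have hbs : b ∣ s.val := by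
          have : b ∣ s.val * (w : ZMod (p * q)).val := dvd_trans (Dvd.intro_left a rfl) ((dvd_of_eq hn.symm).trans hsw')
          exact (hb.dvd_mul.mp this).resolve_right hbw
        have har : a ∣ r.val * s.val := dvd_trans (Dvd.intro b rfl) ((dvd_of_eq hn.symm).trans hrs')
        rcases ha.dvd_mul.mp har with h | h
        · have hd : p * q ∣ r.val := (dvd_of_eq hn).trans (hcab.mul_dvd_of_dvd_of_dvd h hbr)
          exact hr ((hzero r).mpr (Nat.eq_zero_of_dvd_of_lt hd (hval r)))
        · have hd : p * q ∣ s.val := (dvd_of_eq hn).trans (hcab.mul_dvd_of_dvd_of_dvd h hbs)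
          exact hs ((hzero s).mpr (Nat.eq_zero_of_dvd_of_lt hd (hval s)))
      rcases part1 v with ⟨hpv, hqv⟩ | ⟨hqv, hpv⟩ <;>
        rcases part1 w with ⟨hpw, hqw⟩ | ⟨hqw, hpw⟩
      · exact absurd (key p q hp hq hpq rfl hqv hqw) (fun h => h)
      · exact Or.inl ⟨hpv, hqw⟩
      · exact Or.inr ⟨hqv, hpw⟩
      · exact absurd (key q p hq hp (Ne.symm hpq) (mul_comm p q) hpv hpw) (fun h => h)
    · have build : ∀ v w : {x : ZMod (p * q) // x ≠ 0 ∧ ∃ y : ZMod (p * q), y ≠ 0 ∧ x * y = 0},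
          p ∣ (v : ZMod (p * q)).val → q ∣ (w : ZMod (p * q)).val →
          (wGamma (ZMod (p * q))).Adj v w := by
        intro v w hpv hqw
        refine ⟨?_, (q : ZMod (p * q)), (p : ZMod (p * q)), hq_ne, hp_ne, ?_, ?_, ?_⟩
        · intro h
          have h2 : q ∣ (v : ZMod (p * q)).val := h ▸ hqw
          have : (v : ZMod (p * q)).val = 0 :=
            Nat.eq_zero_of_dvd_of_lt (hcop.mul_dvd_of_dvd_of_dvd hpv h2) (hval _)
          exact v.2.1 ((hzero _).mpr this)
        · rw [hmul0, hqval]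
          obtain ⟨k, hk⟩ := hpv
          exact ⟨k, by rw [hk]; ring⟩
        · rw [hmul0, hpval]
          obtain ⟨k, hk⟩ := hqw
          exact ⟨k, by rw [hk]; ring⟩
        · rw [hmul0, hqval, hpval]
          exact ⟨1, by ring⟩
      rintro (⟨hpv, hqw⟩ | ⟨hqv, hpw⟩)
      · exact build v w hpv hqw
      · exact (wGamma (ZMod (p * q))).adj_symm (build w v hpw hqv)
  refine ⟨part1, part2, ?_⟩
  -- Part 3: the isomorphism
  -- map from Fin (p-1) ⊕ Fin (q-1) to the vertices:
  -- inl i ↦ q*(i+1), inr j ↦ p*(j+1)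
  have mem : ∀ m : ℕ, 0 < m → m < p * q → p ∣ m ∨ q ∣ m →
      ((m : ZMod (p * q)) ≠ 0 ∧ ∃ y : ZMod (p * q), y ≠ 0 ∧ (m : ZMod (p * q)) * y = 0) := by
    intro m hm0 hmlt hdvd
    have hval_m : ((m : ZMod (p * q))).val = m := ZMod.val_cast_of_lt hmlt
    constructor
    · intro h
      rw [hzero, hval_m] at h
      exact hm0.ne' h
    · rcases hdvd with ⟨k, hk⟩ | ⟨k, hk⟩
      · exact ⟨(q : ZMod (p * q)), hq_ne, by rw [hmul0, hval_m, hqval, hk]; exact ⟨k, by ring⟩⟩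
      · exact ⟨(p : ZMod (p * q)), hp_ne, by rw [hmul0, hval_m, hpval, hk]; exact ⟨k, by ring⟩⟩
  set V := {x : ZMod (p * q) // x ≠ 0 ∧ ∃ y : ZMod (p * q), y ≠ 0 ∧ x * y = 0} with hV
  have hlt1 : ∀ i : Fin (p - 1), q * (i.val + 1) < p * q := by
    intro i
    have : i.val + 1 ≤ p - 1 := i.2
    have h2 : i.val + 1 < p := by omega
    calc q * (i.val + 1) < q * p := by exact (Nat.mul_lt_mul_left hq0).mpr h2
    _ = p * q := mul_comm q p
  have hlt2 : ∀ j : Fin (q - 1), p * (j.val + 1) < p * q := by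
    intro j
    have h2 : j.val + 1 < q := by omega
    exact (Nat.mul_lt_mul_left hp0).mpr h2
  let g : Fin (p - 1) ⊕ Fin (q - 1) → V := fun a =>
    match a with
    | Sum.inl i => ⟨((q * (i.val + 1) : ℕ) : ZMod (p * q)),
        mem _ (by positivity) (hlt1 i) (Or.inr ⟨i.val + 1, rfl⟩)⟩
    | Sum.inr j => ⟨((p * (j.val + 1) : ℕ) : ZMod (p * q)),
        mem _ (by positivity) (hlt2 j) (Or.inl ⟨j.val + 1, rfl⟩)⟩
  have gval_l : ∀ i : Fin (p - 1), ((g (Sum.inl i) : ZMod (p * q))).val = q * (i.val + 1) :=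
    fun i => ZMod.val_cast_of_lt (hlt1 i)
  have gval_r : ∀ j : Fin (q - 1), ((g (Sum.inr j) : ZMod (p * q))).val = p * (j.val + 1) :=
    fun j => ZMod.val_cast_of_lt (hlt2 j)
  have hql : ∀ i : Fin (p - 1), q ∣ ((g (Sum.inl i) : ZMod (p * q))).val :=
    fun i => (gval_l i) ▸ ⟨i.val + 1, rfl⟩
  have hpl : ∀ i : Fin (p - 1), ¬ p ∣ ((g (Sum.inl i) : ZMod (p * q))).val := by
    intro i h
    rw [gval_l i] at h
    have : p ∣ (i.val + 1) := by
      rcases hp.dvd_mul.mp h with h' | h'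
      · exact absurd ((Nat.prime_dvd_prime_iff_eq hp hq).mp h') hpq
      · exact h'
    have h2 : i.val + 1 < p := by have := i.2; omega
    have := Nat.le_of_dvd (by omega) this
    omega
  have hpr : ∀ j : Fin (q - 1), p ∣ ((g (Sum.inr j) : ZMod (p * q))).val :=
    fun j => (gval_r j) ▸ ⟨j.val + 1, rfl⟩
  have hqr : ∀ j : Fin (q - 1), ¬ q ∣ ((g (Sum.inr j) : ZMod (p * q))).val := by
    intro j h
    rw [gval_r j] at h
    have : q ∣ (j.val + 1) := by
      rcases hq.dvd_mul.mp h with h' | h'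
      · exact absurd ((Nat.prime_dvd_prime_iff_eq hq hp).mp h') hpq.symm
      · exact h'
    have h2 : j.val + 1 < q := by have := j.2; omega
    have := Nat.le_of_dvd (by omega) this
    omega
  have ginj : Function.Injective g := by
    rintro (i | j) (i' | j') h
    · have := congrArg (fun v : V => ((v : ZMod (p * q))).val) h
      simp only [gval_l] at this
      have : i.val = i'.val := by
        have := Nat.eq_of_mul_eq_mul_left hq0 this
        omega
      exact congrArg Sum.inl (Fin.ext this)
    · exact absurd (h ▸ hql i) (hqr j')
    · exact absurd (h ▸ hpr j) (hpl i')
    · have := congrArg (fun v : V => ((v : ZMod (p * q))).val) h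
      simp only [gval_r] at this
      have : j.val = j'.val := by
        have := Nat.eq_of_mul_eq_mul_left hp0 this
        omega
      exact congrArg Sum.inr (Fin.ext this)
  have gsurj : Function.Surjective g := by
    intro v
    have hv0 : (v : ZMod (p * q)).val ≠ 0 := fun h => v.2.1 ((hzero _).mpr h)
    rcases part1 v with ⟨⟨k, hk⟩, hqv⟩ | ⟨⟨k, hk⟩, hpv⟩
    · -- v = p * k, use inr ⟨k-1⟩
      have hk0 : 0 < k := by
        rcases Nat.eq_zero_or_pos k with h | h
        · exact absurd (by rw [hk, h, mul_zero]) hv0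
        · exact h
      have hklt : k < q := by
        have := hval (v : ZMod (p * q))
        rw [hk] at this
        exact lt_of_mul_lt_mul_left this (le_of_lt hp0)
      refine ⟨Sum.inr ⟨k - 1, by omega⟩, ?_⟩
      apply Subtype.ext
      have : ((g (Sum.inr ⟨k - 1, by omega⟩) : ZMod (p * q))).val = p * k := by
        rw [gval_r]; congr 1; show k - 1 + 1 = k; omega
      have h2 := this.trans hk.symm
      exact ZMod.val_injective _ h2
    · have hk0 : 0 < k := by
        rcases Nat.eq_zero_or_pos k with h | h
        · exact absurd (by rw [hk, h, mul_zero]) hv0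
        · exact h
      have hklt : k < p := by
        have := hval (v : ZMod (p * q))
        rw [hk, mul_comm p q] at this
        exact lt_of_mul_lt_mul_left this (le_of_lt hq0)
      refine ⟨Sum.inl ⟨k - 1, by omega⟩, ?_⟩
      apply Subtype.ext
      have : ((g (Sum.inl ⟨k - 1, by omega⟩) : ZMod (p * q))).val = q * k := by
        rw [gval_l]; congr 1; show k - 1 + 1 = k; omega
      have h2 := this.trans hk.symm
      exact ZMod.val_injective _ h2
  let e : Fin (p - 1) ⊕ Fin (q - 1) ≃ V := Equiv.ofBijective g ⟨ginj, gsurj⟩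
  have c1 : ∀ i i' : Fin (p - 1),
      ¬ (completeBipartiteGraph (Fin (p - 1)) (Fin (q - 1))).Adj (Sum.inl i) (Sum.inl i') := by
    intro i i'; simp [completeBipartiteGraph]
  have c2 : ∀ (i : Fin (p - 1)) (j : Fin (q - 1)),
      (completeBipartiteGraph (Fin (p - 1)) (Fin (q - 1))).Adj (Sum.inl i) (Sum.inr j) := by
    intro i j; simp [completeBipartiteGraph]
  have c3 : ∀ (j : Fin (q - 1)) (i : Fin (p - 1)),
      (completeBipartiteGraph (Fin (p - 1)) (Fin (q - 1))).Adj (Sum.inr j) (Sum.inl i) := by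
    intro j i; simp [completeBipartiteGraph]
  have c4 : ∀ j j' : Fin (q - 1),
      ¬ (completeBipartiteGraph (Fin (p - 1)) (Fin (q - 1))).Adj (Sum.inr j) (Sum.inr j') := by
    intro j j'; simp [completeBipartiteGraph]
  have hmap : ∀ a b : Fin (p - 1) ⊕ Fin (q - 1),
      (wGamma (ZMod (p * q))).Adj (e a) (e b) ↔
        (completeBipartiteGraph (Fin (p - 1)) (Fin (q - 1))).Adj a b := by
    intro a b
    have he : ∀ c, e c = g c := fun c => rfl
    rw [he, he, part2]
    rcases a with i | j <;> rcases b with i' | j'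
    · constructor
      · rintro (⟨h, -⟩ | ⟨-, h⟩)
        · exact absurd h (hpl i)
        · exact absurd h (hpl i')
      · intro h; exact absurd h (c1 i i')
    · constructor
      · intro _; exact c2 i j'
      · intro _; exact Or.inr ⟨hql i, hpr j'⟩
    · constructor
      · intro _; exact c3 j i'
      · intro _; exact Or.inl ⟨hpr j, hql i'⟩
    · constructor
      · rintro (⟨-, h⟩ | ⟨h, -⟩)
        · exact absurd h (hqr j')
        · exact absurd h (hqr j)
      · intro h; exact absurd h (c4 j j')
  exact ⟨((RelIso.mk e fun {a b} => hmap a b :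
    completeBipartiteGraph (Fin (p - 1)) (Fin (q - 1)) ≃g wGamma (ZMod (p * q)))).symm⟩
end

section
/- For n = pq a product of two distinct primes, the Laplacian spectrum of WΓ(Z_n) is {0, (p+q−2) with multiplicity 1, (q−1) with multiplicity p−2, (p−1) with multiplicity q−2}. -/
attribute [local instance] Classical.propDecidable

open Matrix Polynomial

section Aux

private theorem det_one_add_smul_ones {K : Type*} [Field K] {A : Type*} [Fintype A]
    [DecidableEq A] (e : K) :
    (1 + Matrix.of (fun _ _ : A => e)).det = 1 + (Fintype.card A : K) * e := by
  have hJ : Matrix.of (fun _ _ : A => e) =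
      Matrix.replicateCol Unit (fun _ => e) * Matrix.replicateRow Unit (fun _ => (1 : K)) := by
    ext i j
    simp [Matrix.mul_apply, Matrix.replicateCol, Matrix.replicateRow]
  rw [hJ, Matrix.det_one_add_mul_comm]
  rw [Matrix.det_unique]
  simp [Matrix.mul_apply, Matrix.replicateRow, Matrix.replicateCol, Finset.mul_sum, mul_comm]

private theorem det_smul_one_add_smul_ones {K : Type*} [Field K] {A : Type*} [Fintype A]
    [DecidableEq A] [Nonempty A] (a d : K) (ha : a ≠ 0) :
    (a • (1 : Matrix A A K) + d • Matrix.of (fun _ _ => (1 : K))).det =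
      a ^ (Fintype.card A - 1) * (a + (Fintype.card A : K) * d) := by
  have key : a • (1 : Matrix A A K) + d • Matrix.of (fun _ _ => (1 : K)) =
      a • (1 + Matrix.of (fun _ _ : A => a⁻¹ * d)) := by
    rw [smul_add]
    congr 1
    ext i j
    simp [mul_inv_cancel_left₀ ha]
  rw [key, Matrix.det_smul, det_one_add_smul_ones]
  have hc : 1 ≤ Fintype.card A := Fintype.card_pos
  have : a ^ Fintype.card A = a ^ (Fintype.card A - 1) * a := by
    rw [← pow_succ, Nat.sub_add_cancel hc]
  rw [this]
  field_simp

/-- the all-ones matrix -/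
private def allOnes (A B : Type*) : Matrix A B ℝ := Matrix.of fun _ _ => (1 : ℝ)

/-- the Laplacian block matrix of a complete bipartite graph -/
private noncomputable def lapCB (A B : Type*) [Fintype A] [Fintype B]
    [DecidableEq A] [DecidableEq B] : Matrix (A ⊕ B) (A ⊕ B) ℝ :=
  Matrix.fromBlocks ((Fintype.card B : ℝ) • 1) (-(allOnes A B))
    (-(allOnes B A)) ((Fintype.card A : ℝ) • 1)

private def rightEquiv (A B : Type*) : {w : A ⊕ B // w.isRight} ≃ B where
  toFun w := w.1.getRight w.2
  invFun b := ⟨.inr b, rfl⟩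
  left_inv := by rintro ⟨(a | b), h⟩ <;> simp_all
  right_inv b := rfl

private def leftEquiv (A B : Type*) : {w : A ⊕ B // w.isLeft} ≃ A where
  toFun w := w.1.getLeft w.2
  invFun a := ⟨.inl a, rfl⟩
  left_inv := by rintro ⟨(a | b), h⟩ <;> simp_all
  right_inv a := rfl

/-- A graph whose adjacency is "opposite sides" under an equivalence with a sum type
has Laplacian matrix the reindexed complete-bipartite Laplacian. -/
private theorem lap_eq_reindex {V A B : Type*} [Fintype V] [Fintype A] [Fintype B]
    [DecidableEq V] [DecidableEq A] [DecidableEq B]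
    (G : SimpleGraph V) [DecidableRel G.Adj] (E : V ≃ A ⊕ B)
    (h : ∀ u v, G.Adj u v ↔
      ((E u).isLeft ∧ (E v).isRight ∨ (E u).isRight ∧ (E v).isLeft)) :
    G.lapMatrix ℝ = Matrix.reindex E.symm E.symm (lapCB A B) := by
  classical
  have hdegl : ∀ u a, E u = Sum.inl a → G.degree u = Fintype.card B := by
    intro u a hEu
    rw [← SimpleGraph.card_neighborSet_eq_degree]
    refine Fintype.card_congr ((Equiv.subtypeEquiv E ?_).trans (rightEquiv A B))
    intro v
    simp [SimpleGraph.mem_neighborSet, h, hEu]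
  have hdegr : ∀ u b, E u = Sum.inr b → G.degree u = Fintype.card A := by
    intro u b hEu
    rw [← SimpleGraph.card_neighborSet_eq_degree]
    refine Fintype.card_congr ((Equiv.subtypeEquiv E ?_).trans (leftEquiv A B))
    intro v
    simp [SimpleGraph.mem_neighborSet, h, hEu]
  ext u v
  rw [Matrix.reindex_apply, Matrix.submatrix_apply, Equiv.symm_symm]
  have huv : u = v ↔ E u = E v := (Equiv.apply_eq_iff_eq E).symm
  rcases hEu : E u with a | b <;> rcases hEv : E v with a' | b'
  · have hadj : ¬ G.Adj u v := by simp [h, hEu, hEv]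
    simp only [SimpleGraph.lapMatrix, SimpleGraph.degMatrix, SimpleGraph.adjMatrix,
      Matrix.sub_apply, Matrix.diagonal_apply, Matrix.of_apply, lapCB,
      Matrix.fromBlocks_apply₁₁, hadj, if_false, sub_zero, Matrix.smul_apply,
      Matrix.one_apply, smul_eq_mul]
    rw [hEu, hEv] at huv
    by_cases hc : a = a'
    · have : u = v := huv.mpr (by rw [hc])
      simp [this, hc, hdegl u a hEu]
    · have : u ≠ v := fun hh => hc (Sum.inl.inj (huv.mp hh))
      simp [this, hc]
  · have hadj : G.Adj u v := by simp [h, hEu, hEv]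
    have : u ≠ v := by
      intro hh; rw [hh, hEv] at hEu; cases hEu
    simp [SimpleGraph.lapMatrix, SimpleGraph.degMatrix, SimpleGraph.adjMatrix,
      Matrix.diagonal_apply, lapCB, allOnes, hadj, this]
  · have hadj : G.Adj u v := by simp [h, hEu, hEv]
    have : u ≠ v := by
      intro hh; rw [hh, hEv] at hEu; cases hEu
    simp [SimpleGraph.lapMatrix, SimpleGraph.degMatrix, SimpleGraph.adjMatrix,
      Matrix.diagonal_apply, lapCB, allOnes, hadj, this]
  · have hadj : ¬ G.Adj u v := by simp [h, hEu, hEv]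
    simp only [SimpleGraph.lapMatrix, SimpleGraph.degMatrix, SimpleGraph.adjMatrix,
      Matrix.sub_apply, Matrix.diagonal_apply, Matrix.of_apply, lapCB,
      Matrix.fromBlocks_apply₂₂, hadj, if_false, sub_zero, Matrix.smul_apply,
      Matrix.one_apply, smul_eq_mul]
    rw [hEu, hEv] at huv
    by_cases hc : b = b'
    · have : u = v := huv.mpr (by rw [hc])
      simp [this, hc, hdegr u b hEu]
    · have : u ≠ v := fun hh => hc (Sum.inr.inj (huv.mp hh))
      simp [this, hc]

set_option synthInstance.maxHeartbeats 1000000 in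
set_option maxHeartbeats 2000000 in
/-- Characteristic polynomial of the complete bipartite Laplacian. -/
private theorem charpoly_lapCB (A B : Type*) [Fintype A] [Fintype B]
    [DecidableEq A] [DecidableEq B] [Nonempty A] [Nonempty B] :
    (lapCB A B).charpoly =
      X * (X - (Fintype.card A + Fintype.card B : ℝ[X])) *
        (X - (Fintype.card B : ℝ[X])) ^ (Fintype.card A - 1) *
        (X - (Fintype.card A : ℝ[X])) ^ (Fintype.card B - 1) := by
  classical
  set m := Fintype.card A with hm
  set n := Fintype.card B with hn
  have hm1 : 1 ≤ m := Fintype.card_pos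
  have hn1 : 1 ≤ n := Fintype.card_pos
  set φ : ℝ[X] →+* RatFunc ℝ := algebraMap ℝ[X] (RatFunc ℝ) with hφ
  have hinj : Function.Injective φ := IsFractionRing.injective ℝ[X] (RatFunc ℝ)
  apply hinj
  set t : RatFunc ℝ := φ X with ht
  set a : RatFunc ℝ := t - (n : RatFunc ℝ) with hadef
  set c : RatFunc ℝ := t - (m : RatFunc ℝ) with hcdef
  have hXsub : ∀ k : ℕ, φ (X - (k : ℝ[X])) = t - (k : RatFunc ℝ) := by
    intro k; rw [map_sub, map_natCast]
  have hne : ∀ k : ℕ, (X - (k : ℝ[X])) ≠ 0 := by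
    intro k; rw [← Polynomial.C_eq_natCast]; exact X_sub_C_ne_zero _
  have ha : a ≠ 0 := by
    rw [hadef, ← hXsub n, ne_eq, map_eq_zero_iff φ hinj]
    exact hne n
  have hc : c ≠ 0 := by
    rw [hcdef, ← hXsub m, ne_eq, map_eq_zero_iff φ hinj]
    exact hne m
  have hmap : (charmatrix (lapCB A B)).map φ =
      Matrix.fromBlocks (a • 1 : Matrix A A (RatFunc ℝ))
        (Matrix.of fun _ _ => (1 : RatFunc ℝ))
        (Matrix.of fun _ _ => (1 : RatFunc ℝ)) (c • 1 : Matrix B B (RatFunc ℝ)) := by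
    ext i j
    rcases i with i | i <;> rcases j with j | j
    · by_cases hij : i = j
      · subst hij
        rw [Matrix.map_apply, charmatrix_apply_eq]
        simp [lapCB, hadef, map_sub, Polynomial.C_eq_natCast]
        rfl
      · rw [Matrix.map_apply, charmatrix_apply_ne _ _ _ (by simpa using hij)]
        simp [lapCB, Matrix.one_apply, hij]
    · rw [Matrix.map_apply, charmatrix_apply_ne _ _ _ (by simp)]
      simp [lapCB, allOnes]
    · rw [Matrix.map_apply, charmatrix_apply_ne _ _ _ (by simp)]
      simp [lapCB, allOnes]
    · by_cases hij : i = j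
      · subst hij
        rw [Matrix.map_apply, charmatrix_apply_eq]
        simp [lapCB, hcdef, map_sub, Polynomial.C_eq_natCast]
        rfl
      · rw [Matrix.map_apply, charmatrix_apply_ne _ _ _ (by simpa using hij)]
        simp [lapCB, Matrix.one_apply, hij]
  have lhs : φ ((lapCB A B).charpoly) =
      ((charmatrix (lapCB A B)).map φ).det := RingHom.map_det φ _
  rw [lhs, hmap]
  haveI : Invertible (c • (1 : Matrix B B (RatFunc ℝ))) := by
    apply Matrix.invertibleOfIsUnitDet
    rw [Matrix.det_smul, Matrix.det_one, mul_one]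
    exact (Ne.isUnit hc).pow _
  have hInvOf : ⅟(c • (1 : Matrix B B (RatFunc ℝ))) = c⁻¹ • 1 :=
    invOf_eq_right_inv (by
      rw [Matrix.smul_mul, Matrix.mul_smul, Matrix.one_mul, smul_smul,
        mul_inv_cancel₀ hc, one_smul])
  rw [Matrix.det_fromBlocks₂₂, hInvOf]
  have hJJ : (Matrix.of fun _ _ => (1 : RatFunc ℝ) : Matrix A B (RatFunc ℝ)) *
      (c⁻¹ • 1 : Matrix B B (RatFunc ℝ)) *
      (Matrix.of fun _ _ => (1 : RatFunc ℝ) : Matrix B A (RatFunc ℝ)) =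
      ((c⁻¹ * (n : RatFunc ℝ)) • Matrix.of fun _ _ => (1 : RatFunc ℝ) :
        Matrix A A (RatFunc ℝ)) := by
    rw [Matrix.mul_smul, Matrix.mul_one, Matrix.smul_mul]
    have h2 : (Matrix.of fun _ _ => (1 : RatFunc ℝ) : Matrix A B (RatFunc ℝ)) *
        (Matrix.of fun _ _ => (1 : RatFunc ℝ) : Matrix B A (RatFunc ℝ)) =
        ((n : RatFunc ℝ) • Matrix.of fun _ _ => (1 : RatFunc ℝ) :
          Matrix A A (RatFunc ℝ)) := by
      ext i j
      simp [Matrix.mul_apply, hn, Finset.card_univ]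
    rw [h2, smul_smul]
  rw [hJJ]
  have hsub : (a • 1 : Matrix A A (RatFunc ℝ)) -
      (c⁻¹ * (n : RatFunc ℝ)) • Matrix.of (fun _ _ => (1 : RatFunc ℝ)) =
      a • 1 + (-(c⁻¹ * (n : RatFunc ℝ))) • Matrix.of (fun _ _ => (1 : RatFunc ℝ)) := by
    rw [sub_eq_add_neg, neg_smul]
  rw [hsub, det_smul_one_add_smul_ones a _ ha, Matrix.det_smul, Matrix.det_one, mul_one]
  rw [_root_.map_mul, _root_.map_mul, _root_.map_mul, map_pow, map_pow, hXsub, hXsub,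
    map_sub, map_add, map_natCast, map_natCast, ← ht, ← hadef, ← hcdef, ← hm, ← hn]
  have hcpow : c ^ n = c ^ (n - 1) * c := by
    rw [← pow_succ, Nat.sub_add_cancel hn1]
  rw [hcpow]
  have hexp : a + (m : RatFunc ℝ) * -(c⁻¹ * (n : RatFunc ℝ)) =
      (a * c - (m : RatFunc ℝ) * (n : RatFunc ℝ)) / c := by
    field_simp
    ring
  rw [hexp]
  have hac : a * c - (m : RatFunc ℝ) * (n : RatFunc ℝ) =
      t * (t - ((m : RatFunc ℝ) + (n : RatFunc ℝ))) := by
    rw [hadef, hcdef]; ring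
  rw [hac]
  field_simp

/-- membership in the weakly zero-divisor vertex set transfers along ring isos -/
private theorem wg_mem_iff {R S : Type*} [CommRing R] [CommRing S] (e : R ≃+* S) (x : R) :
    (x ≠ 0 ∧ ∃ y : R, y ≠ 0 ∧ x * y = 0) ↔
      ((e x ≠ 0) ∧ ∃ y : S, y ≠ 0 ∧ e x * y = 0) := by
  constructor
  · rintro ⟨hx, y, hy, hxy⟩
    refine ⟨fun h => hx (e.injective (by rw [h, map_zero])), e y,
      fun h => hy (e.injective (by rw [h, map_zero])), ?_⟩
    rw [← _root_.map_mul, hxy, map_zero]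
  · rintro ⟨hx, y, hy, hxy⟩
    refine ⟨fun h => hx (by rw [h, map_zero]), e.symm y,
      fun h => hy (by rw [← e.apply_symm_apply y, h, map_zero]), ?_⟩
    apply e.injective
    rw [_root_.map_mul, e.apply_symm_apply, hxy, map_zero]

/-- adjacency in the weakly zero-divisor graph transfers along ring isos -/
private theorem wg_adj_iff {R S : Type*} [CommRing R] [CommRing S] (e : R ≃+* S)
    (u v : {x : R // x ≠ 0 ∧ ∃ y : R, y ≠ 0 ∧ x * y = 0})
    (u' v' : {x : S // x ≠ 0 ∧ ∃ y : S, y ≠ 0 ∧ x * y = 0})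
    (hu : (u' : S) = e u) (hv : (v' : S) = e v) :
    (wGamma R).Adj u v ↔ (wGamma S).Adj u' v' := by
  constructor
  · rintro ⟨hne, r, s, hr, hs, hra, hsb, hrs⟩
    refine ⟨?_, e r, e s, fun h => hr (e.injective (by rw [h, map_zero])),
      fun h => hs (e.injective (by rw [h, map_zero])), ?_, ?_, ?_⟩
    · intro h
      apply hne
      apply Subtype.ext
      apply e.injective
      rw [← hu, ← hv, h]
    · rw [hu, ← _root_.map_mul, hra, map_zero]
    · rw [hv, ← _root_.map_mul, hsb, map_zero]
    · rw [← _root_.map_mul, hrs, map_zero]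
  · rintro ⟨hne, r, s, hr, hs, hra, hsb, hrs⟩
    refine ⟨?_, e.symm r, e.symm s,
      fun h => hr (by rw [← e.apply_symm_apply r, h, map_zero]),
      fun h => hs (by rw [← e.apply_symm_apply s, h, map_zero]), ?_, ?_, ?_⟩
    · intro h
      apply hne
      apply Subtype.ext
      rw [hu, hv, h]
    · apply e.injective
      rw [_root_.map_mul, e.apply_symm_apply, map_zero, ← hu, hra]
    · apply e.injective
      rw [_root_.map_mul, e.apply_symm_apply, map_zero, ← hv, hsb]
    · apply e.injective
      rw [_root_.map_mul, e.apply_symm_apply, e.apply_symm_apply, map_zero, hrs]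

end Aux

set_option maxHeartbeats 2000000 in
/-- For `n = pq` a product of two distinct primes, the Laplacian spectrum of
`WΓ(ℤ_n)` is `{0, p+q-2, (q-1) with multiplicity p-2, (p-1) with multiplicity q-2}`. -/
theorem stmt_16 (p q : ℕ) [Fact p.Prime] [Fact q.Prime] (hpq : p ≠ q) :
    ((wGamma (ZMod (p * q))).lapMatrix ℝ).charpoly.roots =
      (0 : ℝ) ::ₘ ((p : ℝ) + (q : ℝ) - 2) ::ₘ
        (Multiset.replicate (p - 2) ((q : ℝ) - 1) +
         Multiset.replicate (q - 2) ((p : ℝ) - 1)) := by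
  have hp := (Fact.out : p.Prime)
  have hq := (Fact.out : q.Prime)
  haveI : NeZero p := ⟨hp.ne_zero⟩
  haveI : NeZero q := ⟨hq.ne_zero⟩
  have hcop : Nat.Coprime p q := (Nat.coprime_primes hp hq).mpr hpq
  haveI : Nonempty {a : ZMod p // a ≠ 0} := ⟨⟨1, one_ne_zero⟩⟩
  haveI : Nonempty {b : ZMod q // b ≠ 0} := ⟨⟨1, one_ne_zero⟩⟩
  set e := ZMod.chineseRemainder hcop with he
  -- characterize nonzero zero-divisors in the product ring
  have hchar : ∀ x : ZMod p × ZMod q,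
      (x ≠ 0 ∧ ∃ y : ZMod p × ZMod q, y ≠ 0 ∧ x * y = 0) ↔
        ((x.1 ≠ 0 ∧ x.2 = 0) ∨ (x.1 = 0 ∧ x.2 ≠ 0)) := by
    intro x
    constructor
    · rintro ⟨hx, y, hy, hxy⟩
      have h1 : x.1 * y.1 = 0 := congrArg Prod.fst hxy
      have h2 : x.2 * y.2 = 0 := congrArg Prod.snd hxy
      by_cases ha : x.1 = 0
      · exact Or.inr ⟨ha, fun hb => hx (Prod.ext_iff.mpr ⟨ha, hb⟩)⟩
      · refine Or.inl ⟨ha, ?_⟩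
        have hy1 : y.1 = 0 := (mul_eq_zero.mp h1).resolve_left ha
        have hy2 : y.2 ≠ 0 := fun h => hy (Prod.ext_iff.mpr ⟨hy1, h⟩)
        exact (mul_eq_zero.mp h2).resolve_right hy2
    · rintro (⟨ha, hb⟩ | ⟨ha, hb⟩)
      · refine ⟨fun h => ha (congrArg Prod.fst h), ((0 : ZMod p), (1 : ZMod q)),
          fun h => one_ne_zero (congrArg Prod.snd h), ?_⟩
        exact Prod.ext_iff.mpr ⟨mul_zero _, by rw [Prod.snd_mul]; simp [hb]⟩
      · refine ⟨fun h => hb (congrArg Prod.snd h), ((1 : ZMod p), (0 : ZMod q)),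
          fun h => one_ne_zero (congrArg Prod.fst h), ?_⟩
        exact Prod.ext_iff.mpr ⟨by rw [Prod.fst_mul]; simp [ha], mul_zero _⟩
  -- the bijection from A ⊕ B
  let g : {a : ZMod p // a ≠ 0} ⊕ {b : ZMod q // b ≠ 0} →
      {x : ZMod p × ZMod q // x ≠ 0 ∧ ∃ y : ZMod p × ZMod q, y ≠ 0 ∧ x * y = 0} :=
    fun w => match w with
    | .inl a => ⟨(a.1, 0), (hchar _).mpr (Or.inl ⟨a.2, rfl⟩)⟩
    | .inr b => ⟨(0, b.1), (hchar _).mpr (Or.inr ⟨rfl, b.2⟩)⟩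
  have hg : Function.Bijective g := by
    constructor
    · rintro (a | b) (a' | b') hww <;>
        simp only [g, Subtype.mk.injEq, Prod.mk.injEq] at hww
      · exact congrArg Sum.inl (Subtype.ext hww.1)
      · exact absurd hww.1 a.2
      · exact absurd hww.1.symm a'.2
      · exact congrArg Sum.inr (Subtype.ext hww.2)
    · rintro ⟨x, hx⟩
      rcases (hchar x).mp hx with ⟨h1, h2⟩ | ⟨h1, h2⟩
      · exact ⟨.inl ⟨x.1, h1⟩, Subtype.ext (Prod.ext_iff.mpr ⟨rfl, h2.symm⟩)⟩
      · exact ⟨.inr ⟨x.2, h2⟩, Subtype.ext (Prod.ext_iff.mpr ⟨h1.symm, rfl⟩)⟩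
  -- adjacency of images of g
  have hadj2 : ∀ w w', (wGamma (ZMod p × ZMod q)).Adj (g w) (g w') ↔
      ((w.isLeft ∧ w'.isRight) ∨ (w.isRight ∧ w'.isLeft)) := by
    rintro (a | b) (a' | b')
    · refine iff_of_false ?_ (by simp)
      rintro ⟨hne, r, s, hr, hs, hra, hsb, hrs⟩
      have hra1 : r.1 * a.1 = 0 := congrArg Prod.fst hra
      have hsa1 : s.1 * a'.1 = 0 := congrArg Prod.fst hsb
      have hr1 : r.1 = 0 := (mul_eq_zero.mp hra1).resolve_right a.2
      have hs1 : s.1 = 0 := (mul_eq_zero.mp hsa1).resolve_right a'.2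
      have hr2 : r.2 ≠ 0 := fun h => hr (Prod.ext_iff.mpr ⟨hr1, h⟩)
      have hs2 : s.2 ≠ 0 := fun h => hs (Prod.ext_iff.mpr ⟨hs1, h⟩)
      have : r.2 * s.2 = 0 := congrArg Prod.snd hrs
      rcases mul_eq_zero.mp this with h | h
      · exact hr2 h
      · exact hs2 h
    · refine iff_of_true ?_ (by simp)
      refine ⟨fun h => a.2 (congrArg (fun z : { x : ZMod p × ZMod q //
          x ≠ 0 ∧ ∃ y : ZMod p × ZMod q, y ≠ 0 ∧ x * y = 0 } => (z : ZMod p × ZMod q).1) h),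
        ((0 : ZMod p), (1 : ZMod q)), ((1 : ZMod p), (0 : ZMod q)),
        fun h => one_ne_zero (congrArg Prod.snd h),
        fun h => one_ne_zero (congrArg Prod.fst h), ?_, ?_, ?_⟩ <;>
        exact Prod.ext_iff.mpr ⟨by simp [g], by simp [g]⟩
    · refine iff_of_true ?_ (by simp)
      refine ⟨fun h => b.2 (congrArg (fun z : { x : ZMod p × ZMod q //
          x ≠ 0 ∧ ∃ y : ZMod p × ZMod q, y ≠ 0 ∧ x * y = 0 } => (z : ZMod p × ZMod q).2) h),
        ((1 : ZMod p), (0 : ZMod q)), ((0 : ZMod p), (1 : ZMod q)),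
        fun h => one_ne_zero (congrArg Prod.fst h),
        fun h => one_ne_zero (congrArg Prod.snd h), ?_, ?_, ?_⟩ <;>
        exact Prod.ext_iff.mpr ⟨by simp [g], by simp [g]⟩
    · refine iff_of_false ?_ (by simp)
      rintro ⟨hne, r, s, hr, hs, hra, hsb, hrs⟩
      have hra2 : r.2 * b.1 = 0 := congrArg Prod.snd hra
      have hsb2 : s.2 * b'.1 = 0 := congrArg Prod.snd hsb
      have hr2 : r.2 = 0 := (mul_eq_zero.mp hra2).resolve_right b.2
      have hs2 : s.2 = 0 := (mul_eq_zero.mp hsb2).resolve_right b'.2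
      have hr1 : r.1 ≠ 0 := fun h => hr (Prod.ext_iff.mpr ⟨h, hr2⟩)
      have hs1 : s.1 ≠ 0 := fun h => hs (Prod.ext_iff.mpr ⟨h, hs2⟩)
      have : r.1 * s.1 = 0 := congrArg Prod.fst hrs
      rcases mul_eq_zero.mp this with h | h
      · exact hr1 h
      · exact hs1 h
  -- assemble the equivalence
  let E1 : {x : ZMod (p * q) // x ≠ 0 ∧ ∃ y : ZMod (p * q), y ≠ 0 ∧ x * y = 0} ≃
      {x : ZMod p × ZMod q // x ≠ 0 ∧ ∃ y : ZMod p × ZMod q, y ≠ 0 ∧ x * y = 0} :=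
    e.toEquiv.subtypeEquiv (fun x => wg_mem_iff e x)
  let E2 := Equiv.ofBijective g hg
  let E := E1.trans E2.symm
  have hgE : ∀ u, g (E u) = E1 u := fun u => E2.apply_symm_apply (E1 u)
  have hAdj : ∀ u v, (wGamma (ZMod (p * q))).Adj u v ↔
      (((E u).isLeft ∧ (E v).isRight) ∨ ((E u).isRight ∧ (E v).isLeft)) := by
    intro u v
    rw [wg_adj_iff e u v (g (E u)) (g (E v))
      (by rw [hgE]; rfl) (by rw [hgE]; rfl)]
    exact hadj2 (E u) (E v)
  rw [lap_eq_reindex _ E hAdj, Matrix.charpoly_reindex, charpoly_lapCB]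
  -- cardinalities
  have cardA : Fintype.card {a : ZMod p // a ≠ 0} = p - 1 := by
    rw [Fintype.card_congr unitsEquivNeZero.symm, ZMod.card_units]
  have cardB : Fintype.card {b : ZMod q // b ≠ 0} = q - 1 := by
    rw [Fintype.card_congr unitsEquivNeZero.symm, ZMod.card_units]
  rw [cardA, cardB]
  have hc2 : ((q - 1 : ℕ) : ℝ[X]) = C ((q : ℝ) - 1) := by
    rw [Nat.cast_sub hq.one_le, Nat.cast_one, map_sub, _root_.map_one, Polynomial.C_eq_natCast]
  have hc3 : ((p - 1 : ℕ) : ℝ[X]) = C ((p : ℝ) - 1) := by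
    rw [Nat.cast_sub hp.one_le, Nat.cast_one, map_sub, _root_.map_one, Polynomial.C_eq_natCast]
  have hcs : ((p - 1 : ℕ) : ℝ[X]) + ((q - 1 : ℕ) : ℝ[X]) = C ((p : ℝ) + (q : ℝ) - 2) := by
    rw [hc2, hc3, ← _root_.map_add]
    congr 1
    ring
  have hexp1 : p - 1 - 1 = p - 2 := by omega
  have hexp2 : q - 1 - 1 = q - 2 := by omega
  rw [hcs, hc2, hc3, hexp1, hexp2]
  have hX : (X : ℝ[X]) ≠ 0 := X_ne_zero
  have h12 : (X * (X - C ((p : ℝ) + (q : ℝ) - 2)) : ℝ[X]) ≠ 0 :=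
    mul_ne_zero hX (X_sub_C_ne_zero _)
  have h123 : (X * (X - C ((p : ℝ) + (q : ℝ) - 2)) *
      (X - C ((q : ℝ) - 1)) ^ (p - 2) : ℝ[X]) ≠ 0 :=
    mul_ne_zero h12 (pow_ne_zero _ (X_sub_C_ne_zero _))
  rw [Polynomial.roots_mul (mul_ne_zero h123 (pow_ne_zero _ (X_sub_C_ne_zero _))),
    Polynomial.roots_mul h123, Polynomial.roots_mul h12, Polynomial.roots_X,
    Polynomial.roots_X_sub_C, Polynomial.roots_pow, Polynomial.roots_pow,
    Polynomial.roots_X_sub_C, Polynomial.roots_X_sub_C]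
  simp only [Multiset.nsmul_singleton, Multiset.singleton_add, Multiset.cons_add]
end
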